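/- Let T' be a tree with at least two vertices and let T be the tree obtained from T' by adding a disjoint copy of a subdivided star X having t ≥ 2 leaves and joining the center x of X by an edge to a vertex of T'. Then γ(T) = γ(T') + t and γ_t2(T) ≤ γ_t2(T') + t; in particular, if γ(T') = γ_t2(T'), then γ(T) = γ_t2(T). -/

import Mathlib

open SimpleGraph

/-- A dominating set: every vertex outside `S` has a neighbor in `S`. -/
def IsDominatingSet {V : Type} (G : SimpleGraph V) (S : Set V) : Prop :=
  ∀ v ∉ S, ∃ u ∈ S, G.Adj u v

/-- A total dominating set: every vertex has a neighbor in `S`. -/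
def IsTotalDominatingSet {V : Type} (G : SimpleGraph V) (S : Set V) : Prop :=
  ∀ v : V, ∃ u ∈ S, G.Adj u v

/-- `u` is within distance two of `v`. -/
def WithinTwo {V : Type} (G : SimpleGraph V) (u v : V) : Prop :=
  G.Adj u v ∨ ∃ w, G.Adj u w ∧ G.Adj w v

/-- A semitotal dominating set: a dominating set in which every vertex is within
distance two of another vertex of the set. -/
def IsSemitotalDominatingSet {V : Type} (G : SimpleGraph V) (S : Set V) : Prop :=
  IsDominatingSet G S ∧ ∀ v ∈ S, ∃ u ∈ S, u ≠ v ∧ WithinTwo G u v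

/-- The domination number `γ(G)`. -/
noncomputable def dominationNumber {V : Type} (G : SimpleGraph V) : ℕ :=
  sInf {n | ∃ S : Set V, IsDominatingSet G S ∧ S.ncard = n}

/-- The total domination number `γ_t(G)`. -/
noncomputable def totalDominationNumber {V : Type} (G : SimpleGraph V) : ℕ :=
  sInf {n | ∃ S : Set V, IsTotalDominatingSet G S ∧ S.ncard = n}

/-- The semitotal domination number `γ_t2(G)`. -/
noncomputable def semitotalDominationNumber {V : Type} (G : SimpleGraph V) : ℕ :=
  sInf {n | ∃ S : Set V, IsSemitotalDominatingSet G S ∧ S.ncard = n}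

/-- A leaf: a vertex of degree one. -/
def IsLeaf {V : Type} (G : SimpleGraph V) (v : V) : Prop :=
  (G.neighborSet v).ncard = 1

/-- A support vertex: a vertex adjacent to a leaf. -/
def IsSupport {V : Type} (G : SimpleGraph V) (v : V) : Prop :=
  ∃ u, G.Adj v u ∧ IsLeaf G u

/-- A star: a graph isomorphic to `K_{1,m}` for some `m ≥ 1`. -/
def IsStar {V : Type} (G : SimpleGraph V) : Prop :=
  ∃ m : ℕ, 1 ≤ m ∧ Nonempty (G ≃g completeBipartiteGraph Unit (Fin m))

/-- The graph obtained from the disjoint union of `G` and `H` by adding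
the single edge joining `v : V` to `w : W`. -/
def attach {V W : Type} (G : SimpleGraph V) (H : SimpleGraph W) (v : V) (w : W) :
    SimpleGraph (V ⊕ W) where
  Adj x y :=
    match x, y with
    | Sum.inl a, Sum.inl b => G.Adj a b
    | Sum.inr a, Sum.inr b => H.Adj a b
    | Sum.inl a, Sum.inr b => a = v ∧ b = w
    | Sum.inr a, Sum.inl b => b = v ∧ a = w
  symm := by
    constructor
    rintro (a | a) (b | b) h
    · exact G.adj_symm h
    · exact ⟨h.1, h.2⟩
    · exact ⟨h.1, h.2⟩
    · exact H.adj_symm h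
  loopless := by
    constructor
    rintro (a | a) h
    · exact G.irrefl h
    · exact H.irrefl h

/-- The statuses used to label the vertices of trees in the family `𝒯`. -/
inductive Label : Type
  | A | B | C
deriving DecidableEq

/-- The labeling of the path `P₅` assigning `A` to the two support vertices,
`C` to the two leaves and `B` to the center. -/
def pathLabel : Fin 5 → Label
  | 0 => Label.C
  | 1 => Label.A
  | 2 => Label.B
  | 3 => Label.A
  | 4 => Label.C

/-- The family `𝒯` of labeled trees: it contains the labeled path `P₅`, and is closed
under operation `𝒪₁` (attach a new leaf labeled `C` to a vertex labeled `A`), operation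
`𝒪₂` (attach a labeled path `P₅` to a degree-one vertex labeled `C`), and under
isomorphism of labeled graphs. -/
inductive TFamily : ∀ {V : Type}, SimpleGraph V → (V → Label) → Prop
  | base : TFamily (SimpleGraph.pathGraph 5) pathLabel
  | op1 {V : Type} {G : SimpleGraph V} {f : V → Label} (v : V)
      (hv : f v = Label.A) (h : TFamily G f) :
      TFamily (attach G (⊥ : SimpleGraph (Fin 1)) v 0)
        (Sum.elim f (fun _ => Label.C))
  | op2 {V : Type} {G : SimpleGraph V} {f : V → Label} (v : V)
      (hv : f v = Label.C) (hdeg : (G.neighborSet v).ncard = 1) (h : TFamily G f) :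
      TFamily (attach G (SimpleGraph.pathGraph 5) v 0) (Sum.elim f pathLabel)
  | iso {V W : Type} {G : SimpleGraph V} {H : SimpleGraph W} {f : V → Label}
      (e : G ≃g H) (h : TFamily G f) : TFamily H (fun w => f (e.symm w))

/-- The subdivided star with `t` leaves: center `none`, and for each `i : Fin t`
a path `none — some (i,0) — some (i,1)`. -/
def subdividedStar (t : ℕ) : SimpleGraph (Option (Fin t × Fin 2)) :=
  SimpleGraph.fromRel (fun x y =>
    match x, y with
    | none, some p => p.2 = 0
    | some p, some q => p.1 = q.1 ∧ p.2 = 0 ∧ q.2 = 1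
    | _, _ => False)

/-- The tree `Y` with three leaves, obtained from the star `K_{1,3}` with center `0`
by subdividing exactly one edge: edges `0-1`, `0-2`, `0-3`, `3-4`.  Its leaves are
`1`, `2`, `4`; the leaf-neighbors of the center are `1` and `2`. -/
def Ytree : SimpleGraph (Fin 5) :=
  SimpleGraph.fromRel (fun x y =>
    (x = 0 ∧ y = 1) ∨ (x = 0 ∧ y = 2) ∨ (x = 0 ∧ y = 3) ∨ (x = 3 ∧ y = 4))

/-- An almost dominating set of `G` relative to `v`: dominates every vertex except
possibly `v`. -/
def IsAlmostDominatingSet {V : Type} (G : SimpleGraph V) (v : V) (S : Set V) : Prop :=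
  ∀ w, w ≠ v → w ∉ S → ∃ u ∈ S, G.Adj u w

/-- The almost domination number `γ(G; v)`. -/
noncomputable def almostDominationNumber {V : Type} (G : SimpleGraph V) (v : V) : ℕ :=
  sInf {n | ∃ S : Set V, IsAlmostDominatingSet G v S ∧ S.ncard = n}

/-- The family `𝒪` of trees: all trees obtainable from the path `P₄` by a finite
sequence of the operations `𝒪₁`–`𝒪₄` (and taking isomorphic copies). -/
inductive OFamily : ∀ {V : Type}, SimpleGraph V → Prop
  | base : OFamily (SimpleGraph.pathGraph 4)
  | op1 {V : Type} {G : SimpleGraph V} (v : V)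
      (hv : ∃ S : Set V, IsSemitotalDominatingSet G S ∧
        S.ncard = semitotalDominationNumber G ∧ v ∈ S)
      (h : OFamily G) :
      OFamily (attach G (⊥ : SimpleGraph (Fin 1)) v 0)
  | op2short {V : Type} {G : SimpleGraph V} (v : V)
      (hv : almostDominationNumber G v = dominationNumber G) (h : OFamily G) :
      OFamily (attach G (SimpleGraph.pathGraph 2) v 0)
  | op2long {V : Type} {G : SimpleGraph V} (v : V)
      (hv : almostDominationNumber G v = dominationNumber G) (h : OFamily G) :
      OFamily (attach G (SimpleGraph.pathGraph 5) v 0)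
  | op3 {V : Type} {G : SimpleGraph V} (v : V) (t : ℕ) (ht : 2 ≤ t) (h : OFamily G) :
      OFamily (attach G (subdividedStar t) v none)
  | op4 {V : Type} {G : SimpleGraph V} (v : V) (h : OFamily G) :
      OFamily (attach G Ytree v 1)
  | iso {V W : Type} {G : SimpleGraph V} {H : SimpleGraph W}
      (e : G ≃g H) (h : OFamily G) : OFamily H

/-! Attaching a graph `H` to `G` by one edge costs at most `γ(H)` (resp. `γ_t2(H)`) extra
vertices, and the `t` support vertices of the subdivided star form a semitotal dominating set
of it. Conversely, a dominating set of `T` meets each of the `t` branches `(i, 0) — (i, 1)`;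
if it also contains the center, trading the center for `v` leaves a dominating set of `T'`.
The last claim is the sandwich `γ(T) ≤ γ_t2(T) ≤ γ_t2(T') + t = γ(T') + t = γ(T)`. -/

section Domination

variable {α : Type} {G : SimpleGraph α}

lemma dominationNumber_le_ncard {S : Set α} (hS : IsDominatingSet G S) :
    dominationNumber G ≤ S.ncard :=
  Nat.sInf_le ⟨S, hS, rfl⟩

lemma semitotalDominationNumber_le_ncard {S : Set α} (hS : IsSemitotalDominatingSet G S) :
    semitotalDominationNumber G ≤ S.ncard :=
  Nat.sInf_le ⟨S, hS, rfl⟩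

lemma exists_isDominatingSet_ncard_eq_dominationNumber (G : SimpleGraph α) :
    ∃ S : Set α, IsDominatingSet G S ∧ S.ncard = dominationNumber G := by
  have huniv : IsDominatingSet G Set.univ := fun _ h => absurd (Set.mem_univ _) h
  exact Nat.sInf_mem (s := {n | ∃ S : Set α, IsDominatingSet G S ∧ S.ncard = n})
    ⟨_, Set.univ, huniv, rfl⟩

lemma exists_isSemitotalDominatingSet_ncard_eq_semitotalDominationNumber
    (hG : ∀ a, ∃ b, G.Adj a b) :
    ∃ S : Set α, IsSemitotalDominatingSet G S ∧ S.ncard = semitotalDominationNumber G := by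
  have huniv : IsSemitotalDominatingSet G Set.univ := by
    refine ⟨fun _ h => absurd (Set.mem_univ _) h, fun a _ => ?_⟩
    obtain ⟨b, hab⟩ := hG a
    exact ⟨b, Set.mem_univ b, hab.ne', Or.inl hab.symm⟩
  exact Nat.sInf_mem (s := {n | ∃ S : Set α, IsSemitotalDominatingSet G S ∧ S.ncard = n})
    ⟨_, Set.univ, huniv, rfl⟩

lemma dominationNumber_le_semitotalDominationNumber (hG : ∀ a, ∃ b, G.Adj a b) :
    dominationNumber G ≤ semitotalDominationNumber G := by
  obtain ⟨S, hS, hcard⟩ := exists_isSemitotalDominatingSet_ncard_eq_semitotalDominationNumber hG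
  exact hcard ▸ dominationNumber_le_ncard hS.1

lemma WithinTwo.map {β : Type} {H : SimpleGraph β} (f : G →g H) {u v : α}
    (h : WithinTwo G u v) : WithinTwo H (f u) (f v) := by
  rcases h with h | ⟨w, huw, hwv⟩
  · exact Or.inl (f.map_adj h)
  · exact Or.inr ⟨f w, f.map_adj huw, f.map_adj hwv⟩

end Domination

lemma Set.ncard_preimage_inl_add_ncard_preimage_inr {α β : Type} {s : Set (α ⊕ β)}
    (hs : s.Finite) : (Sum.inl ⁻¹' s).ncard + (Sum.inr ⁻¹' s).ncard = s.ncard := by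
  conv_rhs => rw [← Set.image_preimage_inl_union_image_preimage_inr s]
  rw [Set.ncard_union_eq Set.disjoint_image_inl_image_inr
      ((hs.preimage Sum.inl_injective.injOn).image _)
      ((hs.preimage Sum.inr_injective.injOn).image _),
    Set.ncard_image_of_injective _ Sum.inl_injective,
    Set.ncard_image_of_injective _ Sum.inr_injective]

section Attach

variable {V W : Type} {G : SimpleGraph V} {H : SimpleGraph W} {v : V} {w : W}

variable (G H v w) in
def attach.inl : G →g attach G H v w := ⟨Sum.inl, id⟩

variable (G H v w) in
def attach.inr : H →g attach G H v w := ⟨Sum.inr, id⟩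

lemma attach_exists_adj (hG : ∀ a, ∃ b, G.Adj a b) (hH : ∀ a, ∃ b, H.Adj a b) :
    ∀ x, ∃ y, (attach G H v w).Adj x y
  | .inl a => (hG a).elim fun b hab => ⟨.inl b, hab⟩
  | .inr a => (hH a).elim fun b hab => ⟨.inr b, hab⟩

lemma IsDominatingSet.attach {D : Set V} {E : Set W} (hD : IsDominatingSet G D)
    (hE : IsDominatingSet H E) :
    IsDominatingSet (_root_.attach G H v w) (Sum.inl '' D ∪ Sum.inr '' E) := by
  rintro (a | a) ha
  · obtain ⟨b, hb, hab⟩ := hD a fun h => ha (Or.inl ⟨a, h, rfl⟩)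
    exact ⟨.inl b, Or.inl ⟨b, hb, rfl⟩, hab⟩
  · obtain ⟨b, hb, hab⟩ := hE a fun h => ha (Or.inr ⟨a, h, rfl⟩)
    exact ⟨.inr b, Or.inr ⟨b, hb, rfl⟩, hab⟩

lemma IsSemitotalDominatingSet.attach {D : Set V} {E : Set W}
    (hD : IsSemitotalDominatingSet G D) (hE : IsSemitotalDominatingSet H E) :
    IsSemitotalDominatingSet (_root_.attach G H v w) (Sum.inl '' D ∪ Sum.inr '' E) := by
  refine ⟨hD.1.attach hE.1, ?_⟩
  rintro _ (⟨a, ha, rfl⟩ | ⟨a, ha, rfl⟩)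
  · obtain ⟨b, hb, hba, h⟩ := hD.2 a ha
    exact ⟨.inl b, Or.inl ⟨b, hb, rfl⟩, Sum.inl_injective.ne hba,
      h.map (attach.inl G H v w)⟩
  · obtain ⟨b, hb, hba, h⟩ := hE.2 a ha
    exact ⟨.inr b, Or.inr ⟨b, hb, rfl⟩, Sum.inr_injective.ne hba,
      h.map (attach.inr G H v w)⟩

lemma dominationNumber_attach_le :
    dominationNumber (attach G H v w) ≤ dominationNumber G + dominationNumber H := by
  obtain ⟨D, hD, hDcard⟩ := exists_isDominatingSet_ncard_eq_dominationNumber G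
  obtain ⟨E, hE, hEcard⟩ := exists_isDominatingSet_ncard_eq_dominationNumber H
  rw [← hDcard, ← hEcard]
  calc dominationNumber (attach G H v w) ≤ (Sum.inl '' D ∪ Sum.inr '' E).ncard :=
        dominationNumber_le_ncard (hD.attach hE)
    _ ≤ (Sum.inl '' D).ncard + (Sum.inr '' E).ncard := Set.ncard_union_le _ _
    _ = D.ncard + E.ncard := by
        rw [Set.ncard_image_of_injective _ Sum.inl_injective,
          Set.ncard_image_of_injective _ Sum.inr_injective]

lemma semitotalDominationNumber_attach_le (hG : ∀ a, ∃ b, G.Adj a b)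
    (hH : ∀ a, ∃ b, H.Adj a b) :
    semitotalDominationNumber (attach G H v w) ≤
      semitotalDominationNumber G + semitotalDominationNumber H := by
  obtain ⟨D, hD, hDcard⟩ :=
    exists_isSemitotalDominatingSet_ncard_eq_semitotalDominationNumber hG
  obtain ⟨E, hE, hEcard⟩ :=
    exists_isSemitotalDominatingSet_ncard_eq_semitotalDominationNumber hH
  rw [← hDcard, ← hEcard]
  calc semitotalDominationNumber (attach G H v w) ≤ (Sum.inl '' D ∪ Sum.inr '' E).ncard :=
        semitotalDominationNumber_le_ncard (hD.attach hE)
    _ ≤ (Sum.inl '' D).ncard + (Sum.inr '' E).ncard := Set.ncard_union_le _ _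
    _ = D.ncard + E.ncard := by
        rw [Set.ncard_image_of_injective _ Sum.inl_injective,
          Set.ncard_image_of_injective _ Sum.inr_injective]

lemma IsDominatingSet.insert_preimage_inl {S : Set (V ⊕ W)}
    (hS : IsDominatingSet (_root_.attach G H v w) S) :
    IsDominatingSet G (insert v (Sum.inl ⁻¹' S)) := by
  intro a ha
  obtain ⟨b | b, hb, hab⟩ := hS (.inl a) fun h => ha (Or.inr h)
  · exact ⟨b, Or.inr hb, hab⟩
  · exact absurd (Or.inl hab.1) ha

lemma IsDominatingSet.preimage_inl {S : Set (V ⊕ W)}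
    (hS : IsDominatingSet (_root_.attach G H v w) S)
    (hw : Sum.inr w ∉ S) : IsDominatingSet G (Sum.inl ⁻¹' S) := by
  intro a ha
  obtain ⟨b | b, hb, hab⟩ := hS (.inl a) ha
  · exact ⟨b, hb, hab⟩
  · exact absurd (hab.2 ▸ hb) hw

end Attach

section SubdividedStar

variable {t : ℕ}

lemma subdividedStar_adj_none (i : Fin t) : (subdividedStar t).Adj none (some (i, 0)) := by
  simp [subdividedStar]

lemma subdividedStar_adj_some (i : Fin t) :
    (subdividedStar t).Adj (some (i, 0)) (some (i, 1)) := by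
  simp [subdividedStar]

lemma subdividedStar_eq_of_adj_leaf {i : Fin t} {x : Option (Fin t × Fin 2)}
    (h : (subdividedStar t).Adj x (some (i, 1))) : x = some (i, 0) := by
  rcases x with _ | ⟨j, k⟩
  · simp [subdividedStar] at h
  · fin_cases k <;> simp_all [subdividedStar]

lemma subdividedStar_exists_adj (ht : 0 < t) (x : Option (Fin t × Fin 2)) :
    ∃ y, (subdividedStar t).Adj x y := by
  rcases x with _ | ⟨i, k⟩
  · exact ⟨_, subdividedStar_adj_none ⟨0, ht⟩⟩
  · fin_cases k
    · exact ⟨_, (subdividedStar_adj_none i).symm⟩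
    · exact ⟨_, (subdividedStar_adj_some i).symm⟩

variable (t) in
def subdividedStarSupports : Set (Option (Fin t × Fin 2)) :=
  Set.range fun i => some (i, 0)

lemma ncard_subdividedStarSupports : (subdividedStarSupports t).ncard = t := by
  rw [subdividedStarSupports, Set.ncard_range_of_injective (fun i j h => by simpa using h),
    Nat.card_eq_fintype_card, Fintype.card_fin]

lemma isDominatingSet_subdividedStarSupports (ht : 0 < t) :
    IsDominatingSet (subdividedStar t) (subdividedStarSupports t) := by
  rintro (_ | ⟨i, k⟩) hx
  · exact ⟨_, ⟨⟨0, ht⟩, rfl⟩, (subdividedStar_adj_none _).symm⟩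
  · fin_cases k
    · exact absurd ⟨i, rfl⟩ hx
    · exact ⟨_, ⟨i, rfl⟩, subdividedStar_adj_some i⟩

lemma isSemitotalDominatingSet_subdividedStarSupports (ht : 1 < t) :
    IsSemitotalDominatingSet (subdividedStar t) (subdividedStarSupports t) := by
  refine ⟨isDominatingSet_subdividedStarSupports (by omega), ?_⟩
  rintro _ ⟨i, rfl⟩
  obtain ⟨j, hji⟩ := Fintype.exists_ne_of_one_lt_card (by rwa [Fintype.card_fin]) i
  exact ⟨_, ⟨j, rfl⟩, by simpa using hji,
    Or.inr ⟨none, (subdividedStar_adj_none j).symm, subdividedStar_adj_none i⟩⟩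

lemma range_some_subset_image_map_fst {S : Set (Option (Fin t × Fin 2))}
    (hS : ∀ i : Fin t, some (i, 0) ∈ S ∨ some (i, 1) ∈ S) :
    Set.range some ⊆ Option.map Prod.fst '' S := by
  rintro _ ⟨i, rfl⟩
  rcases hS i with h | h
  · exact ⟨_, h, rfl⟩
  · exact ⟨_, h, rfl⟩

lemma le_ncard_of_forall_branch_mem {S : Set (Option (Fin t × Fin 2))}
    (hS : ∀ i : Fin t, some (i, 0) ∈ S ∨ some (i, 1) ∈ S) : t ≤ S.ncard :=
  calc t = (Set.range (some : Fin t → Option (Fin t))).ncard := by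
        rw [Set.ncard_range_of_injective (Option.some_injective _), Nat.card_fin]
    _ ≤ (Option.map Prod.fst '' S).ncard :=
        Set.ncard_le_ncard (range_some_subset_image_map_fst hS)
    _ ≤ S.ncard := Set.ncard_image_le

lemma succ_le_ncard_of_forall_branch_mem {S : Set (Option (Fin t × Fin 2))}
    (hS : ∀ i : Fin t, some (i, 0) ∈ S ∨ some (i, 1) ∈ S) (hnone : none ∈ S) :
    t + 1 ≤ S.ncard := by
  have himage : Option.map Prod.fst '' S = Set.univ := by
    refine Set.eq_univ_of_forall fun o => ?_
    rcases o with _ | i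
    · exact ⟨none, hnone, rfl⟩
    · exact range_some_subset_image_map_fst hS ⟨i, rfl⟩
  calc t + 1 = (Option.map Prod.fst '' S).ncard := by
        rw [himage, Set.ncard_univ, Nat.card_eq_fintype_card, Fintype.card_option,
          Fintype.card_fin]
    _ ≤ S.ncard := Set.ncard_image_le

end SubdividedStar

section AttachSubdividedStar

variable {V : Type} {G : SimpleGraph V} {v : V} {t : ℕ}

lemma dominationNumber_add_le_of_isDominatingSet_attach_subdividedStar [Finite V]
    {S : Set (V ⊕ Option (Fin t × Fin 2))}
    (hS : IsDominatingSet (attach G (subdividedStar t) v none) S) :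
    dominationNumber G + t ≤ S.ncard := by
  have hbranch :
      ∀ i : Fin t, some (i, 0) ∈ Sum.inr ⁻¹' S ∨ some (i, 1) ∈ Sum.inr ⁻¹' S := by
    refine fun i => or_iff_not_imp_right.2 fun hi => ?_
    obtain ⟨_ | x, hx, hadj⟩ := hS _ hi
    · exact absurd hadj.2 (Option.some_ne_none _)
    · rwa [← subdividedStar_eq_of_adj_leaf hadj]
  rw [← Set.ncard_preimage_inl_add_ncard_preimage_inr S.toFinite]
  by_cases hnone : Sum.inr none ∈ S
  · have hG := dominationNumber_le_ncard hS.insert_preimage_inl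
    have hinsert := Set.ncard_insert_le v (Sum.inl ⁻¹' S)
    have hstar := succ_le_ncard_of_forall_branch_mem hbranch hnone
    omega
  · have hG := dominationNumber_le_ncard (hS.preimage_inl hnone)
    have hstar := le_ncard_of_forall_branch_mem hbranch
    omega

lemma dominationNumber_attach_subdividedStar [Finite V] (ht : 0 < t) :
    dominationNumber (attach G (subdividedStar t) v none) = dominationNumber G + t := by
  refine le_antisymm ?_ ?_
  · calc _ ≤ dominationNumber G + dominationNumber (subdividedStar t) :=
          dominationNumber_attach_le
      _ ≤ dominationNumber G + t := by
        grw [dominationNumber_le_ncard (isDominatingSet_subdividedStarSupports ht),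
          ncard_subdividedStarSupports]
  · obtain ⟨S, hS, hcard⟩ := exists_isDominatingSet_ncard_eq_dominationNumber
      (attach G (subdividedStar t) v none)
    exact hcard ▸ dominationNumber_add_le_of_isDominatingSet_attach_subdividedStar hS

lemma semitotalDominationNumber_attach_subdividedStar_le (hG : ∀ a, ∃ b, G.Adj a b)
    (ht : 1 < t) :
    semitotalDominationNumber (attach G (subdividedStar t) v none) ≤
      semitotalDominationNumber G + t :=
  calc _ ≤ semitotalDominationNumber G + semitotalDominationNumber (subdividedStar t) :=
        semitotalDominationNumber_attach_le hG (subdividedStar_exists_adj (by omega))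
    _ ≤ semitotalDominationNumber G + t := by
        grw [semitotalDominationNumber_le_ncard
          (isSemitotalDominatingSet_subdividedStarSupports ht), ncard_subdividedStarSupports]

end AttachSubdividedStar

/-- Attaching a subdivided star with `t ≥ 2` leaves by its center to a
vertex of a tree `T'` of order at least 2 gives a tree `T` with `γ(T) = γ(T') + t`,
`γ_t2(T) ≤ γ_t2(T') + t`; in particular `γ(T') = γ_t2(T')` implies `γ(T) = γ_t2(T)`. -/
theorem attach_subdividedStar_domination {V : Type} [Fintype V] (T' : SimpleGraph V)
    (hT' : T'.IsTree) (hn : 2 ≤ Fintype.card V) (t : ℕ) (ht : 2 ≤ t) (v : V) :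
    dominationNumber (attach T' (subdividedStar t) v none) = dominationNumber T' + t ∧
      semitotalDominationNumber (attach T' (subdividedStar t) v none) ≤
        semitotalDominationNumber T' + t ∧
      (dominationNumber T' = semitotalDominationNumber T' →
        dominationNumber (attach T' (subdividedStar t) v none) =
          semitotalDominationNumber (attach T' (subdividedStar t) v none)) := by
  have : Nontrivial V := Fintype.one_lt_card_iff_nontrivial.mp hn
  have hT'adj : ∀ a, ∃ b, T'.Adj a b := hT'.connected.preconnected.exists_adj_of_nontrivial
  have hγ := dominationNumber_attach_subdividedStar (G := T') (v := v) (by omega : 0 < t)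
  have hγt2 := semitotalDominationNumber_attach_subdividedStar_le hT'adj (v := v) ht
  refine ⟨hγ, hγt2, fun h => le_antisymm ?_ (by omega)⟩
  exact dominationNumber_le_semitotalDominationNumber
    (attach_exists_adj hT'adj (subdividedStar_exists_adj (by omega)))
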